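/- arXiv:2210.04974 — 4 statements merged into one kernel-verified Lean document; each statement's English description precedes it below -/
import Mathlib

section
/- Let P be a probability measure on a measurable space Ω and α ∈ (0,1). Then the map g ↦ -(1/(α-1))·log ∫ |g|^{(α-1)/α} dP is convex on the set of bounded measurable functions g with g < 0 (pointwise strictly negative and bounded away from 0). -/
open MeasureTheory

/-- Measurability of `x ↦ |h x| ^ β` when `|h|` is positive everywhere. -/
lemma aux_meas {Ω : Type*} [MeasurableSpace Ω] {h : Ω → ℝ} (hm : Measurable h)
    (β : ℝ) {ε : ℝ} (hε : 0 < ε) (h1 : ∀ x, ε ≤ |h x|) :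
    Measurable fun x => |h x| ^ β := by
  have heq : (fun x => |h x| ^ β) = fun x => Real.exp (Real.log |h x| * β) :=
    funext fun x => Real.rpow_def_of_pos (lt_of_lt_of_le hε (h1 x)) β
  rw [heq]
  exact Real.measurable_exp.comp ((Real.measurable_log.comp hm.abs).mul_const β)

/-- Integrability and positivity of the integral for `|h|^β` with `|h|` bounded in `[ε, M]`. -/
lemma aux_int {Ω : Type*} [MeasurableSpace Ω] (P : Measure Ω) [IsProbabilityMeasure P]
    {β : ℝ} (hβ : β ≤ 0) {h : Ω → ℝ} (hm : Measurable h) {ε M : ℝ} (hε : 0 < ε)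
    (h1 : ∀ x, ε ≤ |h x|) (h2 : ∀ x, |h x| ≤ M) :
    Integrable (fun x => |h x| ^ β) P ∧ 0 < ∫ x, |h x| ^ β ∂P := by
  have hne : Nonempty Ω := by
    by_contra hc
    rw [not_nonempty_iff] at hc
    have := measure_univ (μ := P)
    simp [Set.eq_empty_of_isEmpty (Set.univ : Set Ω)] at this
  have hM : 0 < M := lt_of_lt_of_le hε ((h1 (Classical.arbitrary Ω)).trans (h2 _))
  have hmeas := aux_meas hm β hε h1
  have hupper : ∀ x, |h x| ^ β ≤ ε ^ β := fun x =>
    Real.rpow_le_rpow_of_nonpos hε (h1 x) hβ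
  have hlower : ∀ x, M ^ β ≤ |h x| ^ β := fun x =>
    Real.rpow_le_rpow_of_nonpos (lt_of_lt_of_le hε (h1 x)) (h2 x) hβ
  have hint : Integrable (fun x => |h x| ^ β) P := by
    refine (integrable_const (ε ^ β)).mono' hmeas.aestronglyMeasurable (ae_of_all _ fun x => ?_)
    rw [Real.norm_eq_abs, abs_of_nonneg (Real.rpow_nonneg (abs_nonneg _) _)]
    exact hupper x
  refine ⟨hint, ?_⟩
  have hmono := integral_mono (integrable_const (M ^ β)) hint hlower
  rw [integral_const, probReal_univ] at hmono
  simp only [ENNReal.toReal_one, one_smul] at hmono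
  exact lt_of_lt_of_le (Real.rpow_pos_of_pos hM β) hmono

theorem stmt3 {Ω : Type*} [MeasurableSpace Ω] (P : Measure Ω) [IsProbabilityMeasure P]
    (α : ℝ) (hα : α ∈ Set.Ioo (0:ℝ) 1)
    (g₀ g₁ : Ω → ℝ) (hm0 : Measurable g₀) (hm1 : Measurable g₁)
    (hb0 : ∃ C : ℝ, ∀ x, C ≤ g₀ x) (hb1 : ∃ C : ℝ, ∀ x, C ≤ g₁ x)
    (hn0 : ∃ ε > (0:ℝ), ∀ x, g₀ x ≤ -ε) (hn1 : ∃ ε > (0:ℝ), ∀ x, g₁ x ≤ -ε)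
    (l : ℝ) (hl : l ∈ Set.Ioo (0:ℝ) 1) :
    -(1/(α-1)) * Real.log (∫ x, |l * g₁ x + (1-l) * g₀ x| ^ ((α-1)/α) ∂P)
      ≤ l * (-(1/(α-1)) * Real.log (∫ x, |g₁ x| ^ ((α-1)/α) ∂P))
        + (1-l) * (-(1/(α-1)) * Real.log (∫ x, |g₀ x| ^ ((α-1)/α) ∂P)) := by
  obtain ⟨hα0, hα1⟩ := hα
  obtain ⟨hl0, hl1⟩ := hl
  obtain ⟨C₀, hC₀⟩ := hb0
  obtain ⟨C₁, hC₁⟩ := hb1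
  obtain ⟨ε₀, hε₀, hg0⟩ := hn0
  obtain ⟨ε₁, hε₁, hg1⟩ := hn1
  set β : ℝ := (α-1)/α with hβdef
  have hβ : β < 0 := div_neg_of_neg_of_pos (by linarith) hα0
  -- bounds on |g₀|, |g₁|
  have habs0 : ∀ x, |g₀ x| = -g₀ x := fun x => abs_of_neg (lt_of_le_of_lt (hg0 x) (by linarith))
  have habs1 : ∀ x, |g₁ x| = -g₁ x := fun x => abs_of_neg (lt_of_le_of_lt (hg1 x) (by linarith))
  have h0lb : ∀ x, ε₀ ≤ |g₀ x| := fun x => by rw [habs0 x]; linarith [hg0 x]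
  have h1lb : ∀ x, ε₁ ≤ |g₁ x| := fun x => by rw [habs1 x]; linarith [hg1 x]
  have h0ub : ∀ x, |g₀ x| ≤ -C₀ := fun x => by rw [habs0 x]; linarith [hC₀ x]
  have h1ub : ∀ x, |g₁ x| ≤ -C₁ := fun x => by rw [habs1 x]; linarith [hC₁ x]
  have h0pos : ∀ x, 0 < |g₀ x| := fun x => lt_of_lt_of_le hε₀ (h0lb x)
  have h1pos : ∀ x, 0 < |g₁ x| := fun x => lt_of_lt_of_le hε₁ (h1lb x)
  -- the mixture
  set h : Ω → ℝ := fun x => l * g₁ x + (1-l) * g₀ x with hhdef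
  have hmh : Measurable h := (hm1.const_mul l).add (hm0.const_mul (1-l))
  have habsh : ∀ x, |h x| = l * |g₁ x| + (1-l) * |g₀ x| := fun x => by
    have hneg : h x < 0 := by
      have h1' := hg1 x; have h0' := hg0 x
      have : l * g₁ x ≤ l * (-ε₁) := mul_le_mul_of_nonneg_left h1' hl0.le
      have : (1-l) * g₀ x ≤ (1-l) * (-ε₀) := mul_le_mul_of_nonneg_left h0' (by linarith)
      simp only [hhdef]
      nlinarith
    rw [abs_of_neg hneg, habs0 x, habs1 x]; simp only [hhdef]; ring
  have hhlb : ∀ x, l * ε₁ + (1-l) * ε₀ ≤ |h x| := fun x => by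
    rw [habsh x]
    have := h1lb x; have := h0lb x
    nlinarith
  have hhub : ∀ x, |h x| ≤ l * (-C₁) + (1-l) * (-C₀) := fun x => by
    rw [habsh x]
    have := h1ub x; have := h0ub x
    nlinarith
  have hεh : (0:ℝ) < l * ε₁ + (1-l) * ε₀ := by nlinarith
  -- the three integrals
  obtain ⟨hint0, hpos0⟩ := aux_int P hβ.le hm0 hε₀ h0lb h0ub
  obtain ⟨hint1, hpos1⟩ := aux_int P hβ.le hm1 hε₁ h1lb h1ub
  obtain ⟨hinth, hposh⟩ := aux_int P hβ.le hmh hεh hhlb hhub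
  set I0 : ℝ := ∫ x, |g₀ x| ^ β ∂P
  set I1 : ℝ := ∫ x, |g₁ x| ^ β ∂P
  set Ih : ℝ := ∫ x, |h x| ^ β ∂P
  -- pointwise AM-GM
  have key : ∀ x, |h x| ^ β ≤ |g₁ x| ^ (l*β) * |g₀ x| ^ ((1-l)*β) := fun x => by
    have hgm : |g₁ x| ^ l * |g₀ x| ^ (1-l) ≤ l * |g₁ x| + (1-l) * |g₀ x| :=
      Real.geom_mean_le_arith_mean2_weighted hl0.le (by linarith) (abs_nonneg _) (abs_nonneg _)
        (by ring)
    have hgmpos : 0 < |g₁ x| ^ l * |g₀ x| ^ (1-l) :=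
      mul_pos (Real.rpow_pos_of_pos (h1pos x) _) (Real.rpow_pos_of_pos (h0pos x) _)
    calc |h x| ^ β = (l * |g₁ x| + (1-l) * |g₀ x|) ^ β := by rw [habsh x]
      _ ≤ (|g₁ x| ^ l * |g₀ x| ^ (1-l)) ^ β :=
          Real.rpow_le_rpow_of_nonpos hgmpos hgm hβ.le
      _ = |g₁ x| ^ (l*β) * |g₀ x| ^ ((1-l)*β) := by
          rw [Real.mul_rpow (Real.rpow_nonneg (abs_nonneg _) _)
            (Real.rpow_nonneg (abs_nonneg _) _), ← Real.rpow_mul (abs_nonneg _),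
            ← Real.rpow_mul (abs_nonneg _)]
  -- integrability of the product
  have hprodmeas : Measurable fun x => |g₁ x| ^ (l*β) * |g₀ x| ^ ((1-l)*β) :=
    (aux_meas hm1 (l*β) hε₁ h1lb).mul (aux_meas hm0 ((1-l)*β) hε₀ h0lb)
  have hprodint : Integrable (fun x => |g₁ x| ^ (l*β) * |g₀ x| ^ ((1-l)*β)) P := by
    refine (integrable_const (ε₁ ^ (l*β) * ε₀ ^ ((1-l)*β))).mono'
      hprodmeas.aestronglyMeasurable (ae_of_all _ fun x => ?_)
    rw [Real.norm_eq_abs, abs_of_nonneg (mul_nonneg (Real.rpow_nonneg (abs_nonneg _) _)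
      (Real.rpow_nonneg (abs_nonneg _) _))]
    exact mul_le_mul (Real.rpow_le_rpow_of_nonpos hε₁ (h1lb x) (by nlinarith))
      (Real.rpow_le_rpow_of_nonpos hε₀ (h0lb x) (by nlinarith))
      (Real.rpow_nonneg (abs_nonneg _) _) (Real.rpow_nonneg (le_of_lt hε₁) _)
  -- step 1 : Ih ≤ ∫ product
  have step1 : Ih ≤ ∫ x, |g₁ x| ^ (l*β) * |g₀ x| ^ ((1-l)*β) ∂P :=
    integral_mono hinth hprodint key
  -- step 2 : Hölder
  have hconj : Real.HolderConjugate (1/l) (1/(1-l)) := by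
    constructor
    · simp only [one_div, inv_inv, inv_one]; ring
    · exact one_div_pos.mpr hl0
    · exact one_div_pos.mpr (by linarith)
  have hmem1 : MemLp (fun x => |g₁ x| ^ (l*β)) (ENNReal.ofReal (1/l)) P := by
    refine MemLp.of_bound (aux_meas hm1 (l*β) hε₁ h1lb).aestronglyMeasurable (ε₁ ^ (l*β))
      (ae_of_all _ fun x => ?_)
    rw [Real.norm_eq_abs, abs_of_nonneg (Real.rpow_nonneg (abs_nonneg _) _)]
    exact Real.rpow_le_rpow_of_nonpos hε₁ (h1lb x) (by nlinarith)
  have hmem0 : MemLp (fun x => |g₀ x| ^ ((1-l)*β)) (ENNReal.ofReal (1/(1-l))) P := by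
    refine MemLp.of_bound (aux_meas hm0 ((1-l)*β) hε₀ h0lb).aestronglyMeasurable (ε₀ ^ ((1-l)*β))
      (ae_of_all _ fun x => ?_)
    rw [Real.norm_eq_abs, abs_of_nonneg (Real.rpow_nonneg (abs_nonneg _) _)]
    exact Real.rpow_le_rpow_of_nonpos hε₀ (h0lb x) (by nlinarith)
  have step2 := integral_mul_le_Lp_mul_Lq_of_nonneg hconj
    (ae_of_all _ fun x => Real.rpow_nonneg (abs_nonneg (g₁ x)) (l*β))
    (ae_of_all _ fun x => Real.rpow_nonneg (abs_nonneg (g₀ x)) ((1-l)*β)) hmem1 hmem0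
  have hsimp1 : ∀ x : Ω, (|g₁ x| ^ (l*β)) ^ (1/l) = |g₁ x| ^ β := fun x => by
    rw [← Real.rpow_mul (abs_nonneg _)]
    congr 1
    field_simp
  have hsimp0 : ∀ x : Ω, (|g₀ x| ^ ((1-l)*β)) ^ (1/(1-l)) = |g₀ x| ^ β := fun x => by
    rw [← Real.rpow_mul (abs_nonneg _)]
    congr 1
    have : (1:ℝ) - l ≠ 0 := by linarith
    field_simp
  rw [integral_congr_ae (ae_of_all _ hsimp1), integral_congr_ae (ae_of_all _ hsimp0)] at step2
  have hinv1 : (1:ℝ)/(1/l) = l := one_div_one_div l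
  have hinv0 : (1:ℝ)/(1/(1-l)) = 1-l := one_div_one_div (1-l)
  rw [hinv1, hinv0] at step2
  -- combine : Ih ≤ I1 ^ l * I0 ^ (1-l)
  have hmain : Ih ≤ I1 ^ l * I0 ^ (1-l) := step1.trans step2
  -- take logs
  have hlog : Real.log Ih ≤ l * Real.log I1 + (1-l) * Real.log I0 := by
    calc Real.log Ih ≤ Real.log (I1 ^ l * I0 ^ (1-l)) := Real.log_le_log hposh hmain
      _ = l * Real.log I1 + (1-l) * Real.log I0 := by
        rw [Real.log_mul (ne_of_gt (Real.rpow_pos_of_pos hpos1 _))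
          (ne_of_gt (Real.rpow_pos_of_pos hpos0 _)),
          Real.log_rpow hpos1, Real.log_rpow hpos0]
  -- finish
  have hc : (0:ℝ) < -(1/(α-1)) := by
    rw [neg_pos]
    exact one_div_neg.mpr (by linarith)
  nlinarith [mul_le_mul_of_nonneg_left hlog hc.le]
end

section
/- Let P, Q be probability measures on Ω with P ≪ Q. Then sup over bounded measurable g < 0 of (∫ g dQ + log ∫ |g| dP) + 1 equals log(ess sup_P dP/dQ) (the worst-case regret D_∞(P‖Q)). -/
open MeasureTheory
open scoped ENNReal

theorem stmt9 {Ω : Type*} [MeasurableSpace Ω] (P Q : Measure Ω)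
    [IsProbabilityMeasure P] [IsProbabilityMeasure Q]
    (hPQ : P ≪ Q) :
    (⨆ g ∈ {g : Ω → ℝ | Measurable g ∧ (∃ C : ℝ, ∀ x, |g x| ≤ C) ∧ ∀ x, g x < 0},
        ((∫ x, g x ∂Q + Real.log (∫ x, |g x| ∂P) + 1 : ℝ) : EReal))
      = ENNReal.log (essSup (P.rnDeriv Q) P) := by
  set ρ : Ω → ℝ≥0∞ := P.rnDeriv Q with hρdef
  have hρm : Measurable ρ := Measure.measurable_rnDeriv P Q
  set M : ℝ≥0∞ := essSup ρ P with hMdef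
  set S : Set Ω := {x | M < ρ x} with hSdef
  have hSmeas : MeasurableSet S := measurableSet_lt measurable_const hρm
  have hPS : P S = 0 := by
    have h := ae_le_essSup (f := ρ) (μ := P)
    rw [ae_iff] at h
    simpa [hSdef, not_le] using h
  have hintS : ∫⁻ x in S, ρ x ∂Q = 0 := by
    rw [Measure.setLIntegral_rnDeriv' hPQ hSmeas]; exact hPS
  -- 1 ≤ M
  have hM1 : 1 ≤ M := by
    have h1 : (1 : ℝ≥0∞) = ∫⁻ x, ρ x ∂Q := by
      rw [Measure.lintegral_rnDeriv hPQ, measure_univ]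
    have hsplit := lintegral_add_compl ρ hSmeas (μ := Q)
    have hcompl : ∫⁻ x in Sᶜ, ρ x ∂Q ≤ M := by
      calc ∫⁻ x in Sᶜ, ρ x ∂Q ≤ ∫⁻ _ in Sᶜ, M ∂Q := by
            refine setLIntegral_mono' hSmeas.compl fun x hx => ?_
            simpa [hSdef, not_lt] using hx
        _ = M * Q Sᶜ := setLIntegral_const _ _
        _ ≤ M * 1 := by gcongr; exact prob_le_one
        _ = M := mul_one M
    calc (1 : ℝ≥0∞) = ∫⁻ x, ρ x ∂Q := h1
      _ = ∫⁻ x in S, ρ x ∂Q + ∫⁻ x in Sᶜ, ρ x ∂Q := hsplit.symm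
      _ = ∫⁻ x in Sᶜ, ρ x ∂Q := by rw [hintS, zero_add]
      _ ≤ M := hcompl
  have hM0 : M ≠ 0 := fun h => by simp [h] at hM1
  -- Q S = 0
  have hQS : Q S = 0 := by
    have h1 : Q S ≤ ∫⁻ x in S, ρ x ∂Q := by
      have h2 : Q S = ∫⁻ _ in S, 1 ∂Q := by rw [setLIntegral_const, one_mul]
      rw [h2]
      refine setLIntegral_mono' hSmeas fun x hx => ?_
      exact le_trans hM1 (le_of_lt hx)
    rw [hintS] at h1
    exact le_antisymm h1 zero_le
  have hQle : ∀ᵐ x ∂Q, ρ x ≤ M := by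
    rw [ae_iff]
    simpa [hSdef, not_le] using hQS
  refine le_antisymm ?_ ?_
  · -- upper bound
    refine iSup₂_le fun g hg => ?_
    obtain ⟨hgm, ⟨C, hC⟩, hgneg⟩ := hg
    by_cases hMtop : M = ⊤
    · rw [hMtop]; exact le_top
    have habs : ∀ x, |g x| = -g x := fun x => abs_of_neg (hgneg x)
    have hintQ : Integrable g Q :=
      ⟨hgm.aestronglyMeasurable,
        HasFiniteIntegral.of_bounded (C := C) (ae_of_all _ fun x => by
          rw [Real.norm_eq_abs]; exact hC x)⟩
    have hintAQ : Integrable (fun x => |g x|) Q := hintQ.abs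
    have hintAP : Integrable (fun x => |g x|) P :=
      ⟨(hgm.abs).aestronglyMeasurable,
        HasFiniteIntegral.of_bounded (C := C) (ae_of_all _ fun x => by
          rw [Real.norm_eq_abs, abs_abs]; exact hC x)⟩
    set a : ℝ := ∫ x, |g x| ∂Q with hadef
    set b : ℝ := ∫ x, |g x| ∂P with hbdef
    have hsupp : Function.support (fun x => |g x|) = Set.univ := by
      ext x; simp [abs_ne_zero.mpr (hgneg x).ne]
    have ha : 0 < a := by
      rw [hadef, integral_pos_iff_support_of_nonneg_ae (ae_of_all _ fun x => abs_nonneg _) hintAQ]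
      rw [hsupp, measure_univ]; norm_num
    have hb : 0 < b := by
      rw [hbdef, integral_pos_iff_support_of_nonneg_ae (ae_of_all _ fun x => abs_nonneg _) hintAP]
      rw [hsupp, measure_univ]; norm_num
    have hMr1 : 1 ≤ M.toReal := by
      rw [← ENNReal.toReal_one]
      exact ENNReal.toReal_mono hMtop hM1
    have hba : b ≤ M.toReal * a := by
      have h1 : b = ∫ x, (ρ x).toReal • |g x| ∂Q :=
        (integral_rnDeriv_smul hPQ (f := fun x => |g x|)).symm
      rw [h1, hadef, ← integral_const_mul]
      refine integral_mono_ae ?_ ?_ ?_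
      · exact (integrable_rnDeriv_smul_iff hPQ).mpr hintAP
      · exact hintAQ.const_mul _
      · filter_upwards [hQle] with x hx
        have h2 : (ρ x).toReal ≤ M.toReal := ENNReal.toReal_mono hMtop hx
        simp only [smul_eq_mul]
        exact mul_le_mul_of_nonneg_right h2 (abs_nonneg _)
    have hgQ : ∫ x, g x ∂Q = -a := by
      have h3 : a = ∫ x, -g x ∂Q := by rw [hadef]; simp only [habs]
      rw [integral_neg] at h3
      linarith
    rw [ENNReal.log_pos_real hM0 hMtop, hgQ]
    have hlog1 : Real.log b ≤ Real.log (M.toReal * a) := Real.log_le_log hb hba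
    have hlog2 : Real.log (M.toReal * a) = Real.log M.toReal + Real.log a :=
      Real.log_mul (by linarith) ha.ne'
    have hlog3 : Real.log a ≤ a - 1 := Real.log_le_sub_one_of_pos ha
    have hfin : -a + Real.log b + 1 ≤ Real.log M.toReal := by
      rw [hlog2] at hlog1; linarith
    exact_mod_cast hfin
  · -- lower bound
    refine le_of_forall_lt fun c hc => ?_
    obtain ⟨d, hcd, hdM⟩ := exists_between hc
    have hdbot : d ≠ ⊥ := fun h => by rw [h] at hcd; exact not_lt_bot hcd
    have hdtop : d ≠ ⊤ := fun h => by
      rw [h] at hdM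
      exact not_top_lt (hdM.trans_le le_top)
    set r : ℝ := d.toReal with hrdef
    have hdr : d = (r : EReal) := (EReal.coe_toReal hdtop hdbot).symm
    set e : ℝ := Real.exp r with hedef
    have he : 0 < e := Real.exp_pos r
    have hEM : ENNReal.ofReal e < M := by
      rw [← ENNReal.log_lt_log_iff, ENNReal.log_ofReal_of_pos he, hedef, Real.log_exp]
      rw [hdr] at hdM; exact hdM
    obtain ⟨t, ht1, ht2⟩ := exists_between hEM
    have httop : t ≠ ⊤ := ht2.ne_top
    set A : Set Ω := {x | t < ρ x} with hAdef
    have hAmeas : MeasurableSet A := measurableSet_lt measurable_const hρm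
    have hPA : 0 < P A := by
      by_contra h
      push_neg at h
      have hPA0 : P A = 0 := le_antisymm h zero_le
      have hae : ∀ᵐ x ∂P, ρ x ≤ t := by
        rw [ae_iff]; simpa [hAdef, not_le] using hPA0
      exact absurd ht2 (not_lt_of_ge (essSup_le_of_ae_le t hae))
    have hQA : 0 < Q A := by
      by_contra h
      push_neg at h
      have : P A = 0 := hPQ (le_antisymm h zero_le)
      exact absurd this hPA.ne'
    have htQA : t * Q A ≤ P A := by
      rw [← Measure.setLIntegral_rnDeriv' hPQ hAmeas]
      calc t * Q A = ∫⁻ _ in A, t ∂Q := (setLIntegral_const _ _).symm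
        _ ≤ ∫⁻ x in A, ρ x ∂Q := setLIntegral_mono' hAmeas fun x hx => le_of_lt hx
    set p : ℝ := (P A).toReal with hpdef
    set q : ℝ := (Q A).toReal with hqdef
    have hPAne : P A ≠ ⊤ := (measure_lt_top P A).ne
    have hQAne : Q A ≠ ⊤ := (measure_lt_top Q A).ne
    have hq : 0 < q := ENNReal.toReal_pos hQA.ne' hQAne
    have hp : 0 < p := ENNReal.toReal_pos hPA.ne' hPAne
    have het : e < t.toReal := by
      rw [← ENNReal.ofReal_lt_iff_lt_toReal he.le httop]; exact ht1
    have htpq : t.toReal * q ≤ p := by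
      have h4 := ENNReal.toReal_mono hPAne htQA
      rwa [ENNReal.toReal_mul] at h4
    have hpq : e * q < p := lt_of_lt_of_le (by nlinarith) htpq
    set D : ℝ := p - e * q with hDdef
    have hD : 0 < D := by rw [hDdef]; linarith
    set δ : ℝ := D / (2 * (|e - 1| + 1)) with hδdef
    have hden : 0 < 2 * (|e - 1| + 1) := by positivity
    have hδ : 0 < δ := div_pos hD hden
    have hkey : e * (q + δ) < p + δ := by
      have h1 : (e - 1) * δ ≤ |e - 1| * δ :=
        mul_le_mul_of_nonneg_right (le_abs_self _) hδ.le
      have h2a : (|e - 1| + 1) * δ = D / 2 := by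
        rw [hδdef]; field_simp
      have h2 : |e - 1| * δ < D := by nlinarith [abs_nonneg (e - 1)]
      nlinarith
    set c' : ℝ := 1 / (q + δ) with hc'def
    have hqδ : 0 < q + δ := by linarith
    have hpδ : 0 < p + δ := by linarith
    have hc' : 0 < c' := by rw [hc'def]; positivity
    set ind : Ω → ℝ := A.indicator (fun _ => (1:ℝ)) with hinddef
    have hind_nonneg : ∀ x, 0 ≤ ind x := fun x => by
      rw [hinddef]; by_cases hx : x ∈ A <;> simp [hx]
    have hind_le : ∀ x, ind x ≤ 1 := fun x => by
      rw [hinddef]; by_cases hx : x ∈ A <;> simp [hx]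
    set g : Ω → ℝ := fun x => -(c' * (ind x + δ)) with hgdef
    have hgneg : ∀ x, g x < 0 := fun x => by
      have h5 := hind_nonneg x
      have h6 : 0 < c' * (ind x + δ) := mul_pos hc' (by linarith)
      rw [hgdef]
      simpa using h6
    have hgm : Measurable g := by
      rw [hgdef]
      exact (((measurable_const.indicator hAmeas).add_const δ).const_mul c').neg
    have hgS : g ∈ {g : Ω → ℝ | Measurable g ∧ (∃ C : ℝ, ∀ x, |g x| ≤ C) ∧ ∀ x, g x < 0} := by
      refine ⟨hgm, ⟨c' * (1 + δ), fun x => ?_⟩, hgneg⟩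
      rw [hgdef]
      have h8 := hind_le x
      have h9 := hind_nonneg x
      rw [abs_neg, abs_of_nonneg (mul_nonneg hc'.le (by linarith))]
      nlinarith
    have habs : ∀ x, |g x| = c' * (ind x + δ) := fun x => by
      rw [abs_of_neg (hgneg x), hgdef, neg_neg]
    have hind_intQ : Integrable ind Q := by
      rw [hinddef]; exact (integrable_const (1:ℝ)).indicator hAmeas
    have hind_intP : Integrable ind P := by
      rw [hinddef]; exact (integrable_const (1:ℝ)).indicator hAmeas
    have hindQ : ∫ x, ind x ∂Q = q := by
      rw [hinddef, hqdef]
      exact integral_indicator_one hAmeas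
    have hindP : ∫ x, ind x ∂P = p := by
      rw [hinddef, hpdef]
      exact integral_indicator_one hAmeas
    have hgQ : ∫ x, g x ∂Q = -1 := by
      have h6 : ∫ x, g x ∂Q = -(c' * (∫ x, ind x ∂Q + δ)) := by
        rw [hgdef]
        rw [integral_neg, integral_const_mul, integral_add hind_intQ (integrable_const δ)]
        simp [measure_univ]
      rw [h6, hindQ, hc'def]
      field_simp
    have hgP : ∫ x, |g x| ∂P = c' * (p + δ) := by
      have h7 : ∫ x, |g x| ∂P = c' * (∫ x, ind x ∂P + δ) := by
        simp only [habs]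
        rw [integral_const_mul, integral_add hind_intP (integrable_const δ)]
        simp [measure_univ]
      rw [h7, hindP]
    have hobj : (∫ x, g x ∂Q + Real.log (∫ x, |g x| ∂P) + 1 : ℝ)
        = Real.log ((p + δ) / (q + δ)) := by
      rw [hgQ, hgP, hc'def]
      rw [one_div, ← div_eq_inv_mul]
      ring
    have hrle : r < Real.log ((p + δ) / (q + δ)) := by
      rw [Real.lt_log_iff_exp_lt (by positivity), ← hedef, lt_div_iff₀ hqδ]
      linarith [hkey]
    calc c < d := hcd
      _ = (r : EReal) := hdr
      _ ≤ ((∫ x, g x ∂Q + Real.log (∫ x, |g x| ∂P) + 1 : ℝ) : EReal) := by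
          rw [hobj]; exact_mod_cast hrle.le
      _ ≤ _ := le_iSup₂ (f := fun g _ =>
          ((∫ x, g x ∂Q + Real.log (∫ x, |g x| ∂P) + 1 : ℝ) : EReal)) g hgS
end

section
/- For α > 1, L > 0, x > 0, c ∈ (0,1): sup over real a of [(1/(α-1)) log(c·e^{(α-1)a} + (1-c)·e^{(α-1)(Lx+a)}) - a] = (1/(α-1)) log(c + (1-c)e^{(α-1)Lx}), and this value is strictly greater than (1-c)Lx. -/
theorem stmt13 (α L x c : ℝ) (hα : 1 < α) (hL : 0 < L) (hx : 0 < x)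
    (hc : c ∈ Set.Ioo (0:ℝ) 1) :
    IsLUB (Set.range fun a : ℝ =>
        (1/(α-1)) * Real.log (c * Real.exp ((α-1)*a) + (1-c) * Real.exp ((α-1)*(L*x+a))) - a)
      ((1/(α-1)) * Real.log (c + (1-c) * Real.exp ((α-1)*L*x))) ∧
    (1-c)*L*x < (1/(α-1)) * Real.log (c + (1-c) * Real.exp ((α-1)*L*x)) := by
  obtain ⟨hc0, hc1⟩ := hc
  have hα1 : (0:ℝ) < α - 1 := by linarith
  have ht : 0 < (α-1)*L*x := by positivity
  have hK : 0 < c + (1-c) * Real.exp ((α-1)*L*x) := by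
    have := Real.exp_pos ((α-1)*L*x)
    nlinarith
  have hconst : ∀ a : ℝ,
      (1/(α-1)) * Real.log (c * Real.exp ((α-1)*a) + (1-c) * Real.exp ((α-1)*(L*x+a))) - a
      = (1/(α-1)) * Real.log (c + (1-c) * Real.exp ((α-1)*L*x)) := by
    intro a
    have h1 : c * Real.exp ((α-1)*a) + (1-c) * Real.exp ((α-1)*(L*x+a))
        = (c + (1-c) * Real.exp ((α-1)*L*x)) * Real.exp ((α-1)*a) := by
      rw [mul_add, Real.exp_add]; ring
    rw [h1, Real.log_mul (ne_of_gt hK) (Real.exp_ne_zero _), Real.log_exp]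
    field_simp
    ring
  constructor
  · have : (Set.range fun a : ℝ =>
        (1/(α-1)) * Real.log (c * Real.exp ((α-1)*a) + (1-c) * Real.exp ((α-1)*(L*x+a))) - a)
        = {(1/(α-1)) * Real.log (c + (1-c) * Real.exp ((α-1)*L*x))} := by
      ext y
      simp only [Set.mem_range, Set.mem_singleton_iff]
      constructor
      · rintro ⟨a, rfl⟩; exact hconst a
      · rintro rfl; exact ⟨0, hconst 0⟩
    rw [this]
    exact isLUB_singleton
  · -- strict convexity of exp
    have hconv := strictConvexOn_exp.2 (Set.mem_univ (0:ℝ)) (Set.mem_univ ((α-1)*L*x))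
      (ne_of_lt ht) hc0 (sub_pos.mpr hc1) (by ring)
    simp only [smul_eq_mul, mul_zero, zero_add, Real.exp_zero, mul_one] at hconv
    have hlog : (1-c) * ((α-1)*L*x) < Real.log (c + (1-c) * Real.exp ((α-1)*L*x)) := by
      have := Real.log_lt_log (Real.exp_pos _) hconv
      rwa [Real.log_exp] at this
    rw [div_mul_eq_mul_div, lt_div_iff₀ hα1, one_mul]
    nlinarith
end

section
/- For α ∈ (0,1) ∪ (1,∞), c ∈ (0,1), L, x > 0, let f be the function on (0,∞) defined by f(y) = -c y + log y for y ≤ αLx and f(y) = (1-c)αLx - y + log y for y > αLx. Then (1/α)(1 + sup_{y>0} f(y)) equals (1-c)Lx if αLx < 1; equals 1/α - cLx + (1/α)log(αLx) if 1 ≤ αLx ≤ 1/c; and equals (1/α)log(1/c) if αLx > 1/c. -/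
lemma log_le_aux (a y : ℝ) (ha : 0 < a) (hy : 0 < y) :
    Real.log y ≤ Real.log a + (y/a - 1) := by
  have h := Real.log_le_sub_one_of_pos (show 0 < y/a from div_pos hy ha)
  rw [Real.log_div (ne_of_gt hy) (ne_of_gt ha)] at h
  linarith

theorem stmt14 (α L x c : ℝ) (hα : α ∈ Set.Ioo (0:ℝ) 1 ∪ Set.Ioi 1) (hL : 0 < L)
    (hx : 0 < x) (hc : c ∈ Set.Ioo (0:ℝ) 1) :
    let f : ℝ → ℝ := fun y =>
      if y ≤ α*L*x then -c*y + Real.log y else (1-c)*(α*L*x) - y + Real.log y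
    let S := sSup (f '' Set.Ioi 0)
    (α*L*x < 1 → (1/α)*(1+S) = (1-c)*L*x) ∧
    (1 ≤ α*L*x ∧ α*L*x ≤ 1/c → (1/α)*(1+S) = 1/α - c*L*x + (1/α)*Real.log (α*L*x)) ∧
    (1/c < α*L*x → (1/α)*(1+S) = (1/α)*Real.log (1/c)) := by
  have hα0 : 0 < α := by
    rcases hα with h | h
    · exact h.1
    · linarith [Set.mem_Ioi.mp h]
  obtain ⟨hc0, hc1⟩ := hc
  intro f S
  set t := α*L*x with htdef
  have ht : 0 < t := by positivity
  refine ⟨?_, ?_, ?_⟩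
  · -- case t < 1
    intro h1
    have hS : S = (1-c)*t - 1 := by
      have hG : IsGreatest (f '' Set.Ioi 0) ((1-c)*t - 1) := by
        constructor
        · refine ⟨1, Set.mem_Ioi.mpr one_pos, ?_⟩
          simp only [f, ← htdef, if_neg (not_le.mpr h1), Real.log_one]
          ring
        · rintro z ⟨y, hy, rfl⟩
          have hy0 : (0:ℝ) < y := hy
          have hlog := Real.log_le_sub_one_of_pos hy0
          simp only [f, ← htdef]
          split_ifs with hyt
          · nlinarith
          · push_neg at hyt; linarith
      exact hG.csSup_eq
    rw [hS]
    field_simp [htdef]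
    ring
  · -- case 1 ≤ t ≤ 1/c
    rintro ⟨h1, h2⟩
    have hS : S = -c*t + Real.log t := by
      have hG : IsGreatest (f '' Set.Ioi 0) (-c*t + Real.log t) := by
        constructor
        · exact ⟨t, ht, by simp [f, ← htdef]⟩
        · rintro z ⟨y, hy, rfl⟩
          have hy0 : (0:ℝ) < y := hy
          have hlog := log_le_aux t y ht hy0
          have httc : c * t ≤ 1 := by
            rw [le_div_iff₀ hc0] at h2; linarith
          simp only [f, ← htdef]
          split_ifs with hyt
          · -- y ≤ t: -c*y + log y ≤ -c*t + log t
            have hkey : y/t - 1 ≤ c*(y - t) := by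
              rw [sub_le_iff_le_add, div_le_iff₀ ht]
              nlinarith [mul_nonneg (sub_nonneg.mpr hyt) (sub_nonneg.mpr httc)]
            linarith
          · -- y > t
            push_neg at hyt
            have heq : y/t - 1 = (y - t)/t := by field_simp
            have hkey : (y - t)/t ≤ y - t :=
              div_le_self (by linarith) h1
            linarith
      exact hG.csSup_eq
    rw [hS]
    field_simp [htdef]
    ring
  · -- case t > 1/c
    intro h3
    have hic : (0:ℝ) < 1/c := by positivity
    have hS : S = -1 + Real.log (1/c) := by
      have hG : IsGreatest (f '' Set.Ioi 0) (-1 + Real.log (1/c)) := by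
        constructor
        · refine ⟨1/c, hic, ?_⟩
          simp only [f, ← htdef, if_pos h3.le]
          field_simp
        · rintro z ⟨y, hy, rfl⟩
          have hy0 : (0:ℝ) < y := hy
          have hlog := log_le_aux (1/c) y hic hy0
          have hdiv : y/(1/c) = c*y := by field_simp
          rw [hdiv] at hlog
          simp only [f, ← htdef]
          split_ifs with hyt
          · linarith
          · push_neg at hyt
            nlinarith [mul_nonneg (by linarith : (0:ℝ) ≤ 1 - c)
              (by linarith : (0:ℝ) ≤ y - t)]
      exact hG.csSup_eq
    rw [hS]
    ring
end
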